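/- For the Lie algebra L(3,6) = su(2) with brackets [f_1, f_2] = f_3, [f_2, f_3] = f_1, [f_3, f_1] = f_2, and orthonormal basis e_1 = αf_1, e_2 = βf_1 + εf_2, e_3 = γf_1 + ζf_2 + ιf_3 (α, ε, ι ≠ 0), the generalised Killing endomorphism matrix A computed via the structure-constant formula is symmetric for every choice of parameters with αει ≠ 0. -/

import Mathlib

/-!
Up to the factor `1/2`, the off-diagonal entries of `A - Aᵀ` are the traces of `ad e_i`, once the
structure constants are known to be antisymmetric in their lower indices. The trace of an
endomorphism does not depend on the basis, and `ad u = u ×₃ ·` has a skew-symmetric matrix in the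
basis `(f_1, f_2, f_3)`, so these traces vanish: `su(2)` is unimodular.
-/

/-- The bracket of `su(2)` in the basis `(f_1,f_2,f_3)`: `[f_1,f_2] = f_3`, `[f_2,f_3] = f_1`, `[f_3,f_1] = f_2`. -/
def su2bracket (u v : Fin 3 → ℝ) : Fin 3 → ℝ :=
  ![u 1 * v 2 - u 2 * v 1, u 2 * v 0 - u 0 * v 2, u 0 * v 1 - u 1 * v 0]

/-- The generalised Killing endomorphism matrix built from structure constants. -/
noncomputable def gkMatrix (c12_1 c12_2 c12_3 c13_1 c13_2 c13_3 c23_1 c23_2 c23_3 : ℝ) :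
    Matrix (Fin 3) (Fin 3) ℝ :=
  !![(1/4) * (c12_3 - c13_2 - c23_1), -(1/2) * c23_2, -(1/2) * c23_3;
     (1/2) * c13_1, (1/4) * (c12_3 + c13_2 + c23_1), (1/2) * c13_3;
     -(1/2) * c12_1, -(1/2) * c12_2, (1/4) * (-c12_3 - c13_2 + c23_1)]

namespace Module.Basis

variable {R V ι : Type*} [CommRing R] [AddCommGroup V] [Module R V] [Fintype ι]

theorem repr_apply_of_eq_sum (b : Basis ι R V) {v : V} {c : ι → R}
    (h : v = ∑ k, c k • b k) (k : ι) : b.repr v k = c k := by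
  rw [h, b.repr_sum_self]

theorem trace_eq_sum_of_apply_eq_sum [DecidableEq ι] (b : Basis ι R V) (f : V →ₗ[R] V)
    {c : ι → ι → R} (hc : ∀ j, f (b j) = ∑ k, c j k • b k) :
    LinearMap.trace R V f = ∑ j, c j j := by
  rw [LinearMap.trace_eq_matrix_trace R b, Matrix.trace]
  exact Finset.sum_congr rfl fun j _ => by
    rw [Matrix.diag_apply, LinearMap.toMatrix_apply, b.repr_apply_of_eq_sum (hc j)]

theorem structConst_swap (b : Basis ι R V) {B : V →ₗ[R] V →ₗ[R] V}
    (hB : ∀ u v, B v u = -B u v) {c : ι → ι → ι → R}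
    (hc : ∀ i j, B (b i) (b j) = ∑ k, c i j k • b k) (i j k : ι) :
    c j i k = -c i j k := by
  rw [← b.repr_apply_of_eq_sum (hc j i), ← b.repr_apply_of_eq_sum (hc i j), hB, map_neg,
    Finsupp.neg_apply]

end Module.Basis

theorem gkMatrix_isSymm_of_traces {c12_1 c12_2 c12_3 c13_1 c13_2 c13_3 c23_1 c23_2 c23_3 : ℝ}
    (h₁ : c12_2 + c13_3 = 0) (h₂ : -c12_1 + c23_3 = 0) (h₃ : -c13_1 - c23_2 = 0) :
    (gkMatrix c12_1 c12_2 c12_3 c13_1 c13_2 c13_3 c23_1 c23_2 c23_3).IsSymm := by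
  rw [Matrix.IsSymm]
  ext i j
  fin_cases i <;> fin_cases j <;> simp [gkMatrix] <;> linarith

theorem gkMatrix_isSymm_of_trace_eq_zero {V : Type*} [AddCommGroup V] [Module ℝ V]
    (b : Module.Basis (Fin 3) ℝ V) {B : V →ₗ[ℝ] V →ₗ[ℝ] V} (hB : ∀ u v, B v u = -B u v)
    (htr : ∀ u, LinearMap.trace ℝ V (B u) = 0) {c : Fin 3 → Fin 3 → Fin 3 → ℝ}
    (hc : ∀ i j, B (b i) (b j) = ∑ k, c i j k • b k) :
    (gkMatrix (c 0 1 0) (c 0 1 1) (c 0 1 2) (c 0 2 0) (c 0 2 1) (c 0 2 2)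
        (c 1 2 0) (c 1 2 1) (c 1 2 2)).IsSymm := by
  have hdiag (i : Fin 3) : c i 0 0 + c i 1 1 + c i 2 2 = 0 := by
    rw [← Fin.sum_univ_three (fun j => c i j j), ← b.trace_eq_sum_of_apply_eq_sum _ (hc i), htr]
  have hswap := b.structConst_swap hB hc
  apply gkMatrix_isSymm_of_traces
  · linarith [hdiag 0, hswap 0 0 0]
  · linarith [hdiag 1, hswap 0 1 0, hswap 1 1 1]
  · linarith [hdiag 2, hswap 0 2 0, hswap 1 2 1, hswap 2 2 2]

theorem trace_crossProduct {R : Type*} [CommRing R] (u : Fin 3 → R) :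
    LinearMap.trace R _ (crossProduct u) = 0 := by
  rw [LinearMap.trace_eq_matrix_trace R (Pi.basisFun R (Fin 3)), LinearMap.toMatrix_eq_toMatrix',
    Matrix.trace_fin_three]
  simp [LinearMap.toMatrix'_apply, cross_apply]

theorem su2bracket_eq_crossProduct (u v : Fin 3 → ℝ) : su2bracket u v = crossProduct u v := by
  rw [cross_apply]
  rfl

theorem linearIndependent_lowerTriangular {K : Type*} [Field K] {α β γ ε ζ ι : K}
    (hα : α ≠ 0) (hε : ε ≠ 0) (hι : ι ≠ 0) :
    LinearIndependent K ![![α, 0, 0], ![β, ε, 0], ![γ, ζ, ι]] :=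
  Matrix.linearIndependent_rows_of_det_ne_zero
    (A := Matrix.of ![![α, 0, 0], ![β, ε, 0], ![γ, ζ, ι]])
    (by simp [Matrix.det_fin_three, hα, hε, hι])

theorem su2_gk_symm (α β γ ε ζ ι : ℝ)
    (hα : α ≠ 0) (hε : ε ≠ 0) (hι : ι ≠ 0)
    (e : Fin 3 → Fin 3 → ℝ)
    (he : e = ![![α, 0, 0], ![β, ε, 0], ![γ, ζ, ι]])
    (c : Fin 3 → Fin 3 → Fin 3 → ℝ)
    (hc : ∀ i j, su2bracket (e i) (e j) = ∑ k, c i j k • e k) :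
    (gkMatrix (c 0 1 0) (c 0 1 1) (c 0 1 2) (c 0 2 0) (c 0 2 1) (c 0 2 2)
        (c 1 2 0) (c 1 2 1) (c 1 2 2)).IsSymm := by
  have hli : LinearIndependent ℝ e := he ▸ linearIndependent_lowerTriangular hα hε hι
  let b := basisOfLinearIndependentOfCardEqFinrank hli (by simp)
  have hb : ⇑b = e := coe_basisOfLinearIndependentOfCardEqFinrank hli _
  refine gkMatrix_isSymm_of_trace_eq_zero b (fun u v => (cross_anticomm u v).symm)
    trace_crossProduct fun i j => ?_
  rw [hb, ← su2bracket_eq_crossProduct, hc]
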